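/- arXiv:math/0403272 — 4 statements merged into one kernel-verified Lean document; each statement's English description precedes it below -/
import Mathlib

section
/- Let Q be a real symmetric positive definite d×d matrix defining the inner product (x, y) = xᵀQy on ℝ^d, and let v_1, …, v_d ∈ ℝ^d be linearly independent. Then the circumradius of the simplex conv{0, v_1, …, v_d} with respect to Q is at most 1 if and only if the (d+1)×(d+1) symmetric matrix BR(Q) — whose (0,0) entry is 4, whose (0,i) and (i,0) entries are (v_i, v_i) for 1 ≤ i ≤ d, and whose (i,j) entry is (v_i, v_j) for 1 ≤ i, j ≤ d — is positive semidefinite. -/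
open Matrix

/-- The `(d+1)×(d+1)` matrix `BR(Q)`: its `(0,0)` entry is `4`, its `(0,i)` and `(i,0)`
entries are `(vᵢ, vᵢ)` for `1 ≤ i ≤ d`, and its `(i,j)` entry is `(vᵢ, vⱼ)` for
`1 ≤ i, j ≤ d`, where `(x, y) = xᵀ Q y`. -/
noncomputable def brMat {d : ℕ} (Q : Matrix (Fin d) (Fin d) ℝ)
    (v : Fin d → Fin d → ℝ) : Matrix (Fin (d + 1)) (Fin (d + 1)) ℝ :=
  Matrix.of fun i j =>
    if hi : i = 0 then
      if hj : j = 0 then 4 else v (j.pred hj) ⬝ᵥ (Q *ᵥ v (j.pred hj))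
    else
      if hj : j = 0 then v (i.pred hi) ⬝ᵥ (Q *ᵥ v (i.pred hi))
      else v (i.pred hi) ⬝ᵥ (Q *ᵥ v (j.pred hj))

/-!
Let `A` be the matrix with rows `2c, v₁, …, v_d`. Equidistance of `c` from `0` and `vᵢ` means
`(vᵢ, vᵢ) = 2 (c, vᵢ)`, so `BR(Q) = A Q Aᵀ + (4 - 4 Q[c]) E₀₀`. The Gram part `A Q Aᵀ` is positive
semidefinite, and since `c` lies in the span of the `vᵢ` there is an `x` with `x₀ = 1` and
`xᵀ A = 0`, on which the quadratic form of `BR(Q)` equals `4 - 4 Q[c]`. Hence `BR(Q)` is positive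
semidefinite exactly when `Q[c] ≤ 1`.
-/

namespace Matrix

variable {m n : Type*} [Fintype n]

lemma dotProduct_mulVec_comm_of_isSymm {Q : Matrix n n ℝ} (hQ : Q.IsSymm) (a b : n → ℝ) :
    a ⬝ᵥ Q *ᵥ b = b ⬝ᵥ Q *ᵥ a := by
  rw [dotProduct_mulVec, ← mulVec_transpose, hQ.eq, dotProduct_comm]

lemma of_mul_mul_transpose_apply (u : m → n → ℝ) (Q : Matrix n n ℝ) (i j : m) :
    (of u * Q * (of u)ᵀ) i j = u i ⬝ᵥ Q *ᵥ u j := by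
  rw [mul_apply', dotProduct_mulVec]
  rfl

lemma dotProduct_diagonal_single_mulVec [Fintype m] [DecidableEq m] (x : m → ℝ) (i : m) (r : ℝ) :
    x ⬝ᵥ diagonal (Pi.single i r) *ᵥ x = r * x i ^ 2 := by
  simp [mulVec_diagonal, dotProduct, Pi.single_apply]
  ring

lemma posSemidef_mul_mul_transpose_add_diagonal_single_iff [Fintype m] [DecidableEq m]
    {A : Matrix m n ℝ} {Q : Matrix n n ℝ} (hQ : Q.PosSemidef) {i : m} {x : m → ℝ}
    (hxi : x i = 1) (hxA : x ᵥ* A = 0) (r : ℝ) :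
    (A * Q * Aᵀ + diagonal (Pi.single i r)).PosSemidef ↔ 0 ≤ r := by
  constructor
  · intro h
    have hgram : (A * Q * Aᵀ) *ᵥ x = 0 := by
      rw [← mulVec_mulVec, mulVec_transpose, hxA, mulVec_zero]
    simpa [add_mulVec, hgram, dotProduct_diagonal_single_mulVec, hxi] using
      h.dotProduct_mulVec_nonneg x
  · intro hr
    refine .add ?_ (posSemidef_diagonal_iff.mpr fun j => ?_)
    · simpa using hQ.mul_mul_conjTranspose_same A
    · by_cases hj : j = i
      · simpa [hj] using hr
      · simp [hj]

lemma two_mul_dotProduct_mulVec_eq_of_equidistant {Q : Matrix n n ℝ}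
    (hQ : Q.IsSymm) {c w : n → ℝ} (h : c ⬝ᵥ Q *ᵥ c = (w - c) ⬝ᵥ Q *ᵥ (w - c)) :
    w ⬝ᵥ Q *ᵥ w = 2 * (c ⬝ᵥ Q *ᵥ w) := by
  rw [sub_dotProduct, mulVec_sub, dotProduct_sub, dotProduct_sub,
    dotProduct_mulVec_comm_of_isSymm hQ w c] at h
  linarith

end Matrix

lemma brMat_eq_mul_mul_transpose_add_diagonal {d : ℕ} {Q : Matrix (Fin d) (Fin d) ℝ}
    (hQ : Q.IsSymm) {v : Fin d → Fin d → ℝ} {c : Fin d → ℝ}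
    (hc : ∀ i, v i ⬝ᵥ Q *ᵥ v i = 2 * (c ⬝ᵥ Q *ᵥ v i)) :
    brMat Q v = of (Fin.cons ((2 : ℝ) • c) v) * Q * (of (Fin.cons ((2 : ℝ) • c) v))ᵀ
      + diagonal (Pi.single 0 (4 - 4 * (c ⬝ᵥ Q *ᵥ c))) := by
  ext i j
  rw [Matrix.add_apply, of_mul_mul_transpose_apply]
  cases i using Fin.cases <;> cases j using Fin.cases <;>
    simp [brMat, hc, diagonal_apply, mulVec_smul, dotProduct_mulVec_comm_of_isSymm hQ c,
      eq_comm (a := (0 : Fin (d + 1)))]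
  ring

lemma exists_vecMul_of_fin_cons_eq_zero {m n : ℕ} {v : Fin m → Fin n → ℝ} {c : Fin n → ℝ}
    (hc : c ∈ Submodule.span ℝ (Set.range v)) :
    ∃ x : Fin (m + 1) → ℝ, x 0 = 1 ∧ x ᵥ* of (Fin.cons ((2 : ℝ) • c) v) = 0 := by
  obtain ⟨β, hβ⟩ := (Submodule.mem_span_range_iff_exists_fun ℝ).mp hc
  refine ⟨Fin.cons 1 (-2 • β), rfl, ?_⟩
  ext k
  simp [vecMul, dotProduct, Fin.sum_univ_succ, ← hβ, Finset.sum_apply, Finset.mul_sum, mul_assoc]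

theorem circumradius_le_one_iff_brMat_posSemidef_general {d : ℕ} (Q : Matrix (Fin d) (Fin d) ℝ)
    (hQpd : Q.PosDef)
    (v : Fin d → Fin d → ℝ) (hv : LinearIndependent ℝ v)
    (c : Fin d → ℝ)
    (hc : ∀ i, c ⬝ᵥ (Q *ᵥ c) = (v i - c) ⬝ᵥ (Q *ᵥ (v i - c))) :
    Real.sqrt (c ⬝ᵥ (Q *ᵥ c)) ≤ 1 ↔ (brMat Q v).PosSemidef := by
  have hQ : Q.IsSymm := isHermitian_iff_isSymm.mp hQpd.isHermitian
  have hc_span : c ∈ Submodule.span ℝ (Set.range v) := by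
    rw [hv.span_eq_top_of_card_eq_finrank' (by simp)]
    exact Submodule.mem_top
  obtain ⟨x, hx0, hxA⟩ := exists_vecMul_of_fin_cons_eq_zero hc_span
  rw [brMat_eq_mul_mul_transpose_add_diagonal hQ
      (fun i => two_mul_dotProduct_mulVec_eq_of_equidistant hQ (hc i)),
    posSemidef_mul_mul_transpose_add_diagonal_single_iff hQpd.posSemidef hx0 hxA,
    Real.sqrt_le_one]
  constructor <;> intro h <;> linarith

/-- The circumradius of the simplex `conv{0, v₁, …, v_d}` with respect to the inner product
given by a symmetric positive definite matrix `Q` is at most `1` if and only if the matrix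
`BR(Q)` is positive semidefinite. -/
theorem circumradius_le_one_iff_brMat_posSemidef {d : ℕ} (Q : Matrix (Fin d) (Fin d) ℝ)
    (hQsymm : Q.IsSymm) (hQpd : Q.PosDef)
    (v : Fin d → Fin d → ℝ) (hv : LinearIndependent ℝ v)
    (c : Fin d → ℝ)
    (hc : ∀ i, c ⬝ᵥ (Q *ᵥ c) = (v i - c) ⬝ᵥ (Q *ᵥ (v i - c))) :
    Real.sqrt (c ⬝ᵥ (Q *ᵥ c)) ≤ 1 ↔ (brMat Q v).PosSemidef :=
  circumradius_le_one_iff_brMat_posSemidef_general Q hQpd v hv c hc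
end

section
/- Let Q be a real symmetric positive definite d×d matrix and let v_1, …, v_d ∈ ℝ^d be linearly independent. Then det BR(Q) ≥ 0 if and only if BR(Q) is positive semidefinite, where BR(Q) is the (d+1)×(d+1) symmetric matrix whose (0,0) entry is 4, whose (0,i) and (i,0) entries are v_iᵀQv_i for 1 ≤ i ≤ d, and whose (i,j) entry is v_iᵀQv_j for 1 ≤ i, j ≤ d. -/
open Matrix

/-- For a symmetric positive definite `Q` and linearly independent `v₁, …, v_d`, the matrix
`BR(Q)` has nonnegative determinant if and only if it is positive semidefinite. -/
theorem brMat_det_nonneg_iff_posSemidef {d : ℕ} (Q : Matrix (Fin d) (Fin d) ℝ)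
    (hQsymm : Q.IsSymm) (hQpd : Q.PosDef)
    (v : Fin d → Fin d → ℝ) (hv : LinearIndependent ℝ v) :
    0 ≤ (brMat Q v).det ↔ (brMat Q v).PosSemidef := by
  classical
  set P : Matrix (Fin d) (Fin d) ℝ := Matrix.of v with hP
  set G : Matrix (Fin d) (Fin d) ℝ := P * Q * Pᵀ with hGdef
  have hGentry : ∀ i j, G i j = v i ⬝ᵥ (Q *ᵥ v j) := by
    intro i j
    simp [hGdef, hP, Matrix.mul_apply, Matrix.mulVec, dotProduct, Finset.mul_sum,
      Finset.sum_mul, mul_assoc]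
  -- G is positive definite
  have hG : G.PosDef := by
    rw [Matrix.posDef_iff_dotProduct_mulVec]
    constructor
    · rw [Matrix.IsHermitian]
      ext i j
      simp only [conjTranspose_apply, star_trivial, transpose_apply]
      rw [hGentry, hGentry, dotProduct_mulVec, ← mulVec_transpose, hQsymm.eq,
        dotProduct_comm]
    · intro x hx
      have key : star x ⬝ᵥ G *ᵥ x = (x ᵥ* P) ⬝ᵥ Q *ᵥ (x ᵥ* P) := by
        rw [hGdef, star_trivial, ← Matrix.mulVec_mulVec, ← Matrix.mulVec_mulVec,
          dotProduct_mulVec x P, mulVec_transpose]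
      rw [key]
      have hy : (x ᵥ* P) ≠ 0 := by
        intro h
        apply hx
        have := (Fintype.linearIndependent_iff.mp hv) x ?_
        · ext i; exact this i
        · ext k
          have := congrFun h k
          simpa [Matrix.vecMul, dotProduct, hP, Finset.sum_apply, Pi.smul_apply,
            smul_eq_mul] using this
      have := hQpd.dotProduct_mulVec_pos hy
      simpa using this
  haveI : Invertible G := hG.isUnit.invertible
  -- the blocks
  set A : Matrix (Fin 1) (Fin 1) ℝ := Matrix.of (fun _ _ => (4 : ℝ)) with hA
  set B : Matrix (Fin 1) (Fin d) ℝ := Matrix.of (fun _ j => v j ⬝ᵥ (Q *ᵥ v j)) with hB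
  set M : Matrix (Fin 1 ⊕ Fin d) (Fin 1 ⊕ Fin d) ℝ := fromBlocks A B Bᴴ G with hM
  -- the reindexing equivalence
  set e : Fin (d + 1) ≃ (Fin 1 ⊕ Fin d) :=
    { toFun := fun i => if h : i = 0 then Sum.inl 0 else Sum.inr (i.pred h)
      invFun := Sum.elim (fun _ => 0) Fin.succ
      left_inv := by
        intro i
        by_cases h : i = 0 <;> simp [h]
      right_inv := by
        rintro (a | a)
        · simp [Subsingleton.elim a 0]
        · simp [Fin.succ_ne_zero] } with he
  have hBR : brMat Q v = M.submatrix e e := by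
    ext i j
    by_cases hi : i = 0 <;> by_cases hj : j = 0 <;>
      simp [brMat, hM, he, hi, hj, fromBlocks, hA, hB, hGentry]
  have hdet : (brMat Q v).det = M.det := by
    rw [hBR, Matrix.det_submatrix_equiv_self]
  have hpsd : (brMat Q v).PosSemidef ↔ M.PosSemidef := by
    rw [hBR]; exact posSemidef_submatrix_equiv e
  have hschur : M.PosSemidef ↔ (A - B * G⁻¹ * Bᴴ).PosSemidef :=
    Matrix.PosDef.fromBlocks₂₂ A B hG
  have hdet2 : M.det = G.det * (A - B * G⁻¹ * Bᴴ).det := by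
    rw [hM, Matrix.det_fromBlocks₂₂, invOf_eq_nonsing_inv]
  set s : ℝ := (A - B * G⁻¹ * Bᴴ) 0 0 with hs
  have hdet1 : (A - B * G⁻¹ * Bᴴ).det = s := by
    rw [Matrix.det_fin_one]
  have h1psd : (A - B * G⁻¹ * Bᴴ).PosSemidef ↔ 0 ≤ s := by
    constructor
    · intro h
      have := h.dotProduct_mulVec_nonneg (fun _ => 1)
      rw [hs]
      simpa [Matrix.mulVec, dotProduct, Fin.sum_univ_one] using this
    · intro h
      rw [Matrix.posSemidef_iff_dotProduct_mulVec]
      constructor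
      · rw [Matrix.IsHermitian]
        ext i j
        rw [Subsingleton.elim i 0, Subsingleton.elim j 0]
        simp
      · intro x
        have : star x ⬝ᵥ (A - B * G⁻¹ * Bᴴ) *ᵥ x = s * (x 0 * x 0) := by
          simp [Matrix.mulVec, dotProduct, Fin.sum_univ_one, hs]
          ring
        rw [this]
        exact mul_nonneg h (mul_self_nonneg _)
  rw [hdet, hdet2, hdet1, hpsd, hschur, h1psd]
  constructor
  · intro h
    by_contra hneg
    push_neg at hneg
    nlinarith [hG.det_pos]
  · intro h
    exact mul_nonneg hG.det_pos.le h
end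

section
/- Let v_1, …, v_d ∈ ℝ^d be linearly independent. Then the set V of all real symmetric positive definite d×d matrices Q such that the circumradius of the simplex conv{0, v_1, …, v_d} with respect to the inner product (x, y) = xᵀQy is at most 1 is a convex and bounded subset of the real vector space of symmetric d×d matrices. -/
/-!
For symmetric `Q`, a point `c` is `Q`-equidistant from `0` and `v` exactly when
`Q[v] = 2 (v, c)`, a condition linear in the pair `(Q, Q c)`. So for `Q = a Q₀ + b Q₁` the
point `c` with `Q c = a Q₀ c₀ + b Q₁ c₁` is again a circumcenter, and from
`2 (x, y) ≤ Q[x] + Q[y]` one gets `Q[c] ≤ a Q₀[c₀] + b Q₁[c₁] ≤ 1`. For boundedness,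
`Q[v_i - 2c] ≥ 0` gives `Q[v_i] ≤ 4 Q[c] ≤ 4`, so the Gram matrix `V Q Vᵀ` has entries in
`[-4, 4]`, and `Q = V⁻¹ (V Q Vᵀ) V⁻¹ᵀ` depends linearly on it.
-/

open Matrix

attribute [local instance] Matrix.normedAddCommGroup

namespace Matrix

variable {n ι : Type*} {Q : Matrix n n ℝ}

lemma PosSemidef.isSymm (hQ : Q.PosSemidef) : Q.IsSymm :=
  isHermitian_iff_isSymm.mp hQ.isHermitian

lemma convex_setOf_posDef : Convex ℝ {Q : Matrix n n ℝ | Q.PosDef} := by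
  intro Q₀ hQ₀ Q₁ hQ₁ a b ha hb hab
  rcases ha.eq_or_lt with rfl | ha
  · simpa [show b = 1 by linarith] using hQ₁
  · exact (hQ₀.smul ha).add_posSemidef (hQ₁.posSemidef.smul hb)

variable [Fintype n]

lemma IsSymm.dotProduct_mulVec_comm (hQ : Q.IsSymm) (x y : n → ℝ) :
    x ⬝ᵥ (Q *ᵥ y) = y ⬝ᵥ (Q *ᵥ x) := by
  rw [dotProduct_mulVec, ← mulVec_transpose, hQ.eq, dotProduct_comm]

lemma IsSymm.sub_dotProduct_mulVec_sub (hQ : Q.IsSymm) (x y : n → ℝ) :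
    (x - y) ⬝ᵥ (Q *ᵥ (x - y)) = x ⬝ᵥ (Q *ᵥ x) - 2 * (x ⬝ᵥ (Q *ᵥ y)) + y ⬝ᵥ (Q *ᵥ y) := by
  simp only [mulVec_sub, dotProduct_sub, sub_dotProduct, hQ.dotProduct_mulVec_comm y x]
  ring

lemma PosSemidef.two_mul_dotProduct_mulVec_le (hQ : Q.PosSemidef) (x y : n → ℝ) :
    2 * (x ⬝ᵥ (Q *ᵥ y)) ≤ x ⬝ᵥ (Q *ᵥ x) + y ⬝ᵥ (Q *ᵥ y) := by
  have h := hQ.dotProduct_mulVec_nonneg (x - y)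
  rw [star_trivial, hQ.isSymm.sub_dotProduct_mulVec_sub] at h
  linarith

lemma PosSemidef.two_mul_abs_dotProduct_mulVec_le (hQ : Q.PosSemidef) (x y : n → ℝ) :
    2 * |x ⬝ᵥ (Q *ᵥ y)| ≤ x ⬝ᵥ (Q *ᵥ x) + y ⬝ᵥ (Q *ᵥ y) := by
  have h := hQ.two_mul_dotProduct_mulVec_le (-x) y
  simp only [neg_dotProduct, mulVec_neg, dotProduct_neg, neg_neg] at h
  cases abs_cases (x ⬝ᵥ (Q *ᵥ y)) <;> linarith [hQ.two_mul_dotProduct_mulVec_le x y]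

lemma dotProduct_smul_add_smul_mulVec_le {Q₀ Q₁ : Matrix n n ℝ} (hQ₀ : Q₀.PosSemidef)
    (hQ₁ : Q₁.PosSemidef) {a b : ℝ} (ha : 0 ≤ a) (hb : 0 ≤ b) {c c₀ c₁ : n → ℝ}
    (hc : (a • Q₀ + b • Q₁) *ᵥ c = a • (Q₀ *ᵥ c₀) + b • (Q₁ *ᵥ c₁)) :
    c ⬝ᵥ ((a • Q₀ + b • Q₁) *ᵥ c) ≤ a * (c₀ ⬝ᵥ (Q₀ *ᵥ c₀)) + b * (c₁ ⬝ᵥ (Q₁ *ᵥ c₁)) := by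
  have h₀ := mul_le_mul_of_nonneg_left (hQ₀.two_mul_dotProduct_mulVec_le c c₀) ha
  have h₁ := mul_le_mul_of_nonneg_left (hQ₁.two_mul_dotProduct_mulVec_le c c₁) hb
  have e₁ : c ⬝ᵥ ((a • Q₀ + b • Q₁) *ᵥ c) =
      a * (c ⬝ᵥ (Q₀ *ᵥ c₀)) + b * (c ⬝ᵥ (Q₁ *ᵥ c₁)) := by
    simp only [hc, dotProduct_add, dotProduct_smul, smul_eq_mul]
  have e₂ : c ⬝ᵥ ((a • Q₀ + b • Q₁) *ᵥ c) =
      a * (c ⬝ᵥ (Q₀ *ᵥ c)) + b * (c ⬝ᵥ (Q₁ *ᵥ c)) := by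
    simp only [add_mulVec, smul_mulVec, dotProduct_add, dotProduct_smul, smul_eq_mul]
  linarith

def IsCircumcenter (Q : Matrix n n ℝ) (v : ι → n → ℝ) (c : n → ℝ) : Prop :=
  ∀ i, c ⬝ᵥ (Q *ᵥ c) = (v i - c) ⬝ᵥ (Q *ᵥ (v i - c))

lemma IsSymm.isCircumcenter_iff (hQ : Q.IsSymm) {v : ι → n → ℝ} {c : n → ℝ} :
    Q.IsCircumcenter v c ↔ ∀ i, v i ⬝ᵥ (Q *ᵥ v i) = 2 * (v i ⬝ᵥ (Q *ᵥ c)) := by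
  refine forall_congr' fun i => ?_
  rw [hQ.sub_dotProduct_mulVec_sub]
  constructor <;> intro h <;> linarith

lemma IsCircumcenter.dotProduct_mulVec_le (hQ : Q.PosSemidef) {v : ι → n → ℝ} {c : n → ℝ}
    (hc : Q.IsCircumcenter v c) (i : ι) : v i ⬝ᵥ (Q *ᵥ v i) ≤ 4 * (c ⬝ᵥ (Q *ᵥ c)) := by
  have h := hQ.two_mul_dotProduct_mulVec_le (v i) ((2 : ℝ) • c)
  simp only [mulVec_smul, dotProduct_smul, smul_dotProduct, smul_eq_mul] at h
  linarith [hQ.isSymm.isCircumcenter_iff.mp hc i]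

end Matrix

section CircumradiusLeOne

variable {n ι : Type*} [Fintype n]

def circumradiusLeOneSet (v : ι → n → ℝ) : Set (Matrix n n ℝ) :=
  {Q | Q.IsSymm ∧ Q.PosDef ∧ ∃ c, Q.IsCircumcenter v c ∧ √(c ⬝ᵥ (Q *ᵥ c)) ≤ 1}

theorem convex_circumradiusLeOneSet (v : ι → n → ℝ) : Convex ℝ (circumradiusLeOneSet v) := by
  classical
  rintro Q₀ ⟨hs₀, hQ₀, c₀, hc₀, hr₀⟩ Q₁ ⟨hs₁, hQ₁, c₁, hc₁, hr₁⟩ a b ha hb hab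
  have hQ : (a • Q₀ + b • Q₁).PosDef := convex_setOf_posDef hQ₀ hQ₁ ha hb hab
  obtain ⟨c, hc⟩ :=
    mulVec_surjective_iff_isUnit.mpr hQ.isUnit (a • (Q₀ *ᵥ c₀) + b • (Q₁ *ᵥ c₁))
  refine ⟨hQ.posSemidef.isSymm, hQ, c, ?_, ?_⟩
  · rw [hQ.posSemidef.isSymm.isCircumcenter_iff]
    intro i
    have h₀ := hs₀.isCircumcenter_iff.mp hc₀ i
    have h₁ := hs₁.isCircumcenter_iff.mp hc₁ i
    simp only [hc, add_mulVec, smul_mulVec, dotProduct_add, dotProduct_smul, smul_eq_mul]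
    linear_combination a * h₀ + b * h₁
  · rw [Real.sqrt_le_one] at hr₀ hr₁ ⊢
    calc c ⬝ᵥ ((a • Q₀ + b • Q₁) *ᵥ c)
        ≤ a * (c₀ ⬝ᵥ (Q₀ *ᵥ c₀)) + b * (c₁ ⬝ᵥ (Q₁ *ᵥ c₁)) :=
          dotProduct_smul_add_smul_mulVec_le hQ₀.posSemidef hQ₁.posSemidef ha hb hc
      _ ≤ a * 1 + b * 1 := by gcongr
      _ = 1 := by rw [mul_one, mul_one, hab]

attribute [local instance] Matrix.normedSpace

theorem isBounded_circumradiusLeOneSet [DecidableEq n] {v : n → n → ℝ}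
    (hv : LinearIndependent ℝ v) : Bornology.IsBounded (circumradiusLeOneSet v) := by
  set V := of v
  have hVV : V⁻¹ * V = 1 :=
    nonsing_inv_mul _ ((isUnit_iff_isUnit_det _).mp (linearIndependent_rows_iff_isUnit.mp hv))
  let Ψ : Matrix n n ℝ →L[ℝ] Matrix n n ℝ := LinearMap.toContinuousLinearMap
    ((LinearMap.mulLeft ℝ V⁻¹).comp (LinearMap.mulRight ℝ V⁻¹ᵀ))
  refine (Ψ.lipschitz.isBounded_image (Metric.isBounded_closedBall (x := 0) (r := 4))).subset ?_
  rintro Q ⟨-, hQ, c, hc, hr⟩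
  refine ⟨V * Q * Vᵀ, ?_, ?_⟩
  · rw [mem_closedBall_zero_iff, norm_le_iff zero_le_four]
    intro k l
    rw [Real.sqrt_le_one] at hr
    rw [mul_mul_apply, transpose_transpose, Real.norm_eq_abs]
    change |v k ⬝ᵥ (Q *ᵥ v l)| ≤ 4
    have hk := hc.dotProduct_mulVec_le hQ.posSemidef k
    have hl := hc.dotProduct_mulVec_le hQ.posSemidef l
    linarith [hQ.posSemidef.two_mul_abs_dotProduct_mulVec_le (v k) (v l)]
  · change V⁻¹ * (V * Q * Vᵀ * V⁻¹ᵀ) = Q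
    rw [Matrix.mul_assoc, ← transpose_mul, hVV, transpose_one, Matrix.mul_one,
      ← Matrix.mul_assoc, hVV, Matrix.one_mul]

end CircumradiusLeOne

/-- For linearly independent `v₁, …, v_d`, the set of symmetric positive definite matrices `Q`
for which the circumradius of the simplex `conv{0, v₁, …, v_d}` with respect to the inner
product `(x, y) = xᵀ Q y` is at most `1` is convex and bounded. -/
theorem convex_bounded_circumradius_le_one {d : ℕ}
    (v : Fin d → Fin d → ℝ) (hv : LinearIndependent ℝ v) :
    Convex ℝ {Q : Matrix (Fin d) (Fin d) ℝ | Q.IsSymm ∧ Q.PosDef ∧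
        ∃ c : Fin d → ℝ,
          (∀ i, c ⬝ᵥ (Q *ᵥ c) = (v i - c) ⬝ᵥ (Q *ᵥ (v i - c))) ∧
          Real.sqrt (c ⬝ᵥ (Q *ᵥ c)) ≤ 1} ∧
    Bornology.IsBounded {Q : Matrix (Fin d) (Fin d) ℝ | Q.IsSymm ∧ Q.PosDef ∧
        ∃ c : Fin d → ℝ,
          (∀ i, c ⬝ᵥ (Q *ᵥ c) = (v i - c) ⬝ᵥ (Q *ᵥ (v i - c))) ∧
          Real.sqrt (c ⬝ᵥ (Q *ᵥ c)) ≤ 1} :=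
  ⟨convex_circumradiusLeOneSet v, isBounded_circumradiusLeOneSet hv⟩
end

section
/- Let Q be a real symmetric positive definite d×d matrix. Then the hyperplane {S symmetric : trace(Q⁻¹S) = d} supports the set {Q′ positive definite symmetric : det Q′ ≥ det Q} at Q: one has trace(Q⁻¹Q) = d, and every real symmetric positive definite d×d matrix Q′ with det Q′ ≥ det Q satisfies trace(Q⁻¹Q′) ≥ d. -/
/-!
Writing `Q⁻¹ = Bᴴ B`, the matrix `N = B Q' Bᴴ` is positive semidefinite with
`trace N = trace (Q⁻¹ Q')` and `det N = det Q' / det Q ≥ 1`. AM-GM on the eigenvalues of `N`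
gives `d · (det N)^(1/d) ≤ trace N`, hence `d ≤ trace (Q⁻¹ Q')`.
-/

open Matrix

namespace Matrix.PosSemidef

variable {n : Type*} [Fintype n] [DecidableEq n]

theorem card_mul_det_rpow_le_trace {A : Matrix n n ℝ} (hA : A.PosSemidef) :
    Fintype.card n * A.det ^ (Fintype.card n : ℝ)⁻¹ ≤ A.trace := by
  cases isEmpty_or_nonempty n
  · simp
  have hcard : (0 : ℝ) < Fintype.card n := by exact_mod_cast Fintype.card_pos
  have hev : ∀ i ∈ Finset.univ, 0 ≤ hA.isHermitian.eigenvalues i :=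
    fun i _ ↦ hA.eigenvalues_nonneg i
  have amgm := Real.geom_mean_le_arith_mean Finset.univ (fun _ ↦ 1) _ (fun _ _ ↦ zero_le_one)
    (by simpa using hcard) hev
  simp only [Real.rpow_one, one_mul, Finset.sum_const, Finset.card_univ, nsmul_eq_mul,
    mul_one] at amgm
  rw [hA.isHermitian.det_eq_prod_eigenvalues, hA.isHermitian.trace_eq_sum_eigenvalues]
  simp only [RCLike.ofReal_real_eq_id, id]
  rw [le_div_iff₀ hcard] at amgm
  linarith

open scoped MatrixOrder in
theorem card_mul_det_mul_rpow_le_trace_mul {P A : Matrix n n ℝ} (hP : P.PosSemidef)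
    (hA : A.PosSemidef) :
    Fintype.card n * (P.det * A.det) ^ (Fintype.card n : ℝ)⁻¹ ≤ (P * A).trace := by
  obtain ⟨B, rfl⟩ := CStarAlgebra.nonneg_iff_eq_star_mul_self.mp hP.nonneg
  have hN := hA.mul_mul_conjTranspose_same B
  have htrace : (star B * B * A).trace = (B * A * Bᴴ).trace := by
    rw [Matrix.mul_assoc, trace_mul_comm, star_eq_conjTranspose]
  have hdet : (star B * B).det * A.det = (B * A * Bᴴ).det := by
    simp only [det_mul, star_eq_conjTranspose]; ring
  simpa only [hdet, htrace] using hN.card_mul_det_rpow_le_trace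

end Matrix.PosSemidef

theorem trace_inv_mul_supports_det_level_set_general {d : ℕ}
    (Q : Matrix (Fin d) (Fin d) ℝ) (hQpd : Q.PosDef) :
    (Q⁻¹ * Q).trace = (d : ℝ) ∧
    ∀ Q' : Matrix (Fin d) (Fin d) ℝ, Q'.IsSymm → Q'.PosDef →
      Q.det ≤ Q'.det → (d : ℝ) ≤ (Q⁻¹ * Q').trace := by
  have hdetQ : 0 < Q.det := hQpd.det_pos
  refine ⟨by simp [nonsing_inv_mul Q hdetQ.ne'.isUnit], fun Q' _ hQ' hle ↦ ?_⟩
  have hdet : 1 ≤ Q⁻¹.det * Q'.det := by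
    rwa [det_nonsing_inv, Ring.inverse_eq_inv', ← div_eq_inv_mul, one_le_div hdetQ]
  calc (d : ℝ) ≤ d * (Q⁻¹.det * Q'.det) ^ (d : ℝ)⁻¹ := by
        simpa using mul_le_mul_of_nonneg_left (Real.one_le_rpow hdet (by positivity)) d.cast_nonneg
    _ ≤ (Q⁻¹ * Q').trace := by
        simpa using hQpd.inv.posSemidef.card_mul_det_mul_rpow_le_trace_mul hQ'.posSemidef

/-- The hyperplane `{S : trace(Q⁻¹ S) = d}` supports the set of symmetric positive definite
matrices with determinant at least `det Q` at `Q`: one has `trace(Q⁻¹ Q) = d`, and every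
symmetric positive definite `Q'` with `det Q' ≥ det Q` satisfies `trace(Q⁻¹ Q') ≥ d`. -/
theorem trace_inv_mul_supports_det_level_set {d : ℕ}
    (Q : Matrix (Fin d) (Fin d) ℝ) (hQsymm : Q.IsSymm) (hQpd : Q.PosDef) :
    (Q⁻¹ * Q).trace = (d : ℝ) ∧
    ∀ Q' : Matrix (Fin d) (Fin d) ℝ, Q'.IsSymm → Q'.PosDef →
      Q.det ≤ Q'.det → (d : ℝ) ≤ (Q⁻¹ * Q').trace :=
  trace_inv_mul_supports_det_level_set_general Q hQpd
end
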